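/- arXiv:2402.13624 — 3 statements merged into one kernel-verified Lean document; each statement's English description precedes it below -/
import Mathlib

section
/- Let D = (A,B,λ) be an extremally matched temporal bi-clique with injective labeling λ and n = |A| = |B| ≥ 2, and let e = {a,b} ∈ A⊗B. Then D has a bi-spanner of size at most 4n − 4 + |M(e)|, where M(e) is the set of edges that are not e-reverted. -/
/-!
Formalization framework for temporal graphs, temporal paths, spanners,
bi-spanners, and related notions from the paper on temporal spanners of
temporal cliques and bi-cliques.

A temporal graph on vertex type `V` is given by a labeling `lab : Sym2 V → L`
(only values on actual edges matter) together with an edge set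
`E : Set (Sym2 V)`.  A temporal path is a nonempty list of vertices whose
consecutive pairs are edges of the allowed edge set and whose labels are
non-decreasing along the path (non-strict temporal path).
-/

namespace TS

variable {V : Type} {L : Type} [LinearOrder L]

/-- The list of (undirected) edges traversed by a list of vertices. -/
def pathEdges (p : List V) : List (Sym2 V) :=
  (p.zip p.tail).map fun q => s(q.1, q.2)

/-- `p` is a temporal path using only edges from `S`, labelled by `lab`:
nonempty, all edges in `S`, labels non-decreasing along the path. -/
def IsTemporalPath (lab : Sym2 V → L) (S : Set (Sym2 V)) (p : List V) : Prop :=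
  p ≠ [] ∧ (∀ e ∈ pathEdges p, e ∈ S) ∧
    (pathEdges p).Chain' fun e f => lab e ≤ lab f

/-- `u` reaches `v` via a temporal path contained in `S`. -/
def Reaches (lab : Sym2 V → L) (S : Set (Sym2 V)) (u v : V) : Prop :=
  ∃ p : List V, p.head? = some u ∧ p.getLast? = some v ∧ IsTemporalPath lab S p

/-- Edge set of the complete graph on `V`. -/
def cliqueEdges (V : Type) : Set (Sym2 V) := {e | ¬ e.IsDiag}

/-- Edge set `A ⊗ B` of the complete bipartite graph with parts `α` and `β`. -/
def bicliqueEdges (α β : Type) : Set (Sym2 (α ⊕ β)) :=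
  {e | ∃ a b, e = s(Sum.inl a, Sum.inr b)}

/-- `S` is a spanner of the temporal graph with edge set `E`:
`S ⊆ E` and every vertex reaches every other vertex within `S`. -/
def IsSpanner (lab : Sym2 V → L) (E S : Set (Sym2 V)) : Prop :=
  S ⊆ E ∧ ∀ u v : V, Reaches lab S u v

/-- `S` is a bi-spanner of the temporal bi-clique with parts `α`, `β`:
`S ⊆ α ⊗ β` and every `a ∈ α` reaches every `b ∈ β` within `S`. -/
def IsBiSpanner {α β : Type} (lab : Sym2 (α ⊕ β) → L) (S : Set (Sym2 (α ⊕ β))) : Prop :=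
  S ⊆ bicliqueEdges α β ∧ ∀ (a : α) (b : β), Reaches lab S (Sum.inl a) (Sum.inr b)

/-- `σ_cl n`: the minimum number `m` such that every temporal clique on `n`
vertices admits a spanner with at most `m` edges. -/
noncomputable def sigmaCl (n : ℕ) : ℕ :=
  sInf {m | ∀ lab : Sym2 (Fin n) → ℕ, ∃ S : Finset (Sym2 (Fin n)),
    IsSpanner lab (cliqueEdges (Fin n)) (↑S) ∧ S.card ≤ m}

/-- `σ_bc n`: the minimum number `m` such that every temporal bi-clique with
`n` vertices on each side admits a bi-spanner with at most `m` edges. -/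
noncomputable def sigmaBc (n : ℕ) : ℕ :=
  sInf {m | ∀ lab : Sym2 (Fin n ⊕ Fin n) → ℕ, ∃ S : Finset (Sym2 (Fin n ⊕ Fin n)),
    IsBiSpanner lab (↑S) ∧ S.card ≤ m}

/-- `In(v,t)`: vertices reaching `v` via a temporal path (in edge set `E`)
all of whose labels are at most `t`. -/
def InSet (lab : Sym2 V → L) (E : Set (Sym2 V)) (v : V) (t : L) : Set V :=
  {u | ∃ p : List V, p.head? = some u ∧ p.getLast? = some v ∧
    IsTemporalPath lab E p ∧ ∀ e ∈ pathEdges p, lab e ≤ t}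

/-- `Out(v,t)`: vertices that `v` reaches via a temporal path (in edge set `E`)
all of whose labels are at least `t`. -/
def OutSet (lab : Sym2 V → L) (E : Set (Sym2 V)) (v : V) (t : L) : Set V :=
  {w | ∃ p : List V, p.head? = some v ∧ p.getLast? = some w ∧
    IsTemporalPath lab E p ∧ ∀ e ∈ pathEdges p, t ≤ lab e}

/-- `In(e)` for the edge `e = {u,v}`. -/
def InEdge (lab : Sym2 V → L) (E : Set (Sym2 V)) (u v : V) : Set V :=
  InSet lab E u (lab s(u, v)) ∪ InSet lab E v (lab s(u, v))

/-- `Out(e)` for the edge `e = {u,v}`. -/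
def OutEdge (lab : Sym2 V → L) (E : Set (Sym2 V)) (u v : V) : Set V :=
  OutSet lab E u (lab s(u, v)) ∪ OutSet lab E v (lab s(u, v))

variable {α β : Type}

/-- In a bi-clique, `b` is the earliest neighbor `π⁻(a)` of `a ∈ A`. -/
def IsEarliestNbrA (lab : Sym2 (α ⊕ β) → L) (a : α) (b : β) : Prop :=
  ∀ b' : β, lab s(Sum.inl a, Sum.inr b) ≤ lab s(Sum.inl a, Sum.inr b')

/-- In a bi-clique, `a` is the earliest neighbor `π⁻(b)` of `b ∈ B`. -/
def IsEarliestNbrB (lab : Sym2 (α ⊕ β) → L) (b : β) (a : α) : Prop :=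
  ∀ a' : α, lab s(Sum.inl a, Sum.inr b) ≤ lab s(Sum.inl a', Sum.inr b)

/-- In a bi-clique, `b` is the latest neighbor `π⁺(a)` of `a ∈ A`. -/
def IsLatestNbrA (lab : Sym2 (α ⊕ β) → L) (a : α) (b : β) : Prop :=
  ∀ b' : β, lab s(Sum.inl a, Sum.inr b') ≤ lab s(Sum.inl a, Sum.inr b)

/-- In a bi-clique, `a` is the latest neighbor `π⁺(b)` of `b ∈ B`. -/
def IsLatestNbrB (lab : Sym2 (α ⊕ β) → L) (b : β) (a : α) : Prop :=
  ∀ a' : α, lab s(Sum.inl a', Sum.inr b) ≤ lab s(Sum.inl a, Sum.inr b)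

/-- The bi-clique is extremally matched: both the set `M⁻` of earliest edges
and the set `M⁺` of latest edges form perfect matchings, i.e. the earliest-
(resp. latest-) neighbor maps of the two sides are mutually inverse. -/
def ExtremallyMatched (lab : Sym2 (α ⊕ β) → L) : Prop :=
  (∃ (f : α → β) (g : β → α),
    (∀ a, IsEarliestNbrA lab a (f a)) ∧ (∀ b, IsEarliestNbrB lab b (g b)) ∧
    (∀ a, g (f a) = a) ∧ (∀ b, f (g b) = b)) ∧
  (∃ (f : α → β) (g : β → α),
    (∀ a, IsLatestNbrA lab a (f a)) ∧ (∀ b, IsLatestNbrB lab b (g b)) ∧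
    (∀ a, g (f a) = a) ∧ (∀ b, f (g b) = b))

/-- `a ∈ A` is dismountable: there is `a' ≠ a` with
`λ({a, π⁻(a')}) ≤ λ({a', π⁻(a')})`. -/
def DismountableA (lab : Sym2 (α ⊕ β) → L) (a : α) : Prop :=
  ∃ (a' : α) (b : β), a' ≠ a ∧ IsEarliestNbrA lab a' b ∧
    lab s(Sum.inl a, Sum.inr b) ≤ lab s(Sum.inl a', Sum.inr b)

/-- `b ∈ B` is dismountable: there is `b' ≠ b` with
`λ({b', π⁺(b')}) ≤ λ({b, π⁺(b')})`. -/
def DismountableB (lab : Sym2 (α ⊕ β) → L) (b : β) : Prop :=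
  ∃ (b' : β) (a : α), b' ≠ b ∧ IsLatestNbrB lab b' a ∧
    lab s(Sum.inl a, Sum.inr b') ≤ lab s(Sum.inl a, Sum.inr b)

/-- The edge `{a', b'}` is `e`-reverted for `e = {a,b}`:
`λ({a', b}) ≤ λ({π⁺(b'), b})` or `λ({π⁻(a'), a}) ≤ λ({b', a})`. -/
def Reverted (lab : Sym2 (α ⊕ β) → L) (a : α) (b : β) (a' : α) (b' : β) : Prop :=
  (∃ a'' : α, IsLatestNbrB lab b' a'' ∧
    lab s(Sum.inl a', Sum.inr b) ≤ lab s(Sum.inl a'', Sum.inr b)) ∨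
  (∃ b'' : β, IsEarliestNbrA lab a' b'' ∧
    lab s(Sum.inl a, Sum.inr b'') ≤ lab s(Sum.inl a, Sum.inr b'))

/-- `M(e)`: the set of edges of the bi-clique that are *not* `e`-reverted,
for `e = {a,b}`. -/
def MSet (lab : Sym2 (α ⊕ β) → L) (a : α) (b : β) : Set (Sym2 (α ⊕ β)) :=
  {e | ∃ (a' : α) (b' : β), e = s(Sum.inl a', Sum.inr b') ∧ ¬ Reverted lab a b a' b'}

/-- `ind_{a}({a,b})`: the (1-based) rank of the edge `{a,b}` among the edges
incident to `a ∈ A`, ordered increasingly by label. -/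
def indA [Fintype β] (lab : Sym2 (α ⊕ β) → ℕ) (a : α) (b : β) : ℕ :=
  (Finset.univ.filter fun b' : β =>
    lab s(Sum.inl a, Sum.inr b') ≤ lab s(Sum.inl a, Sum.inr b)).card

/-- `ind_{b}({a,b})`: the (1-based) rank of the edge `{a,b}` among the edges
incident to `b ∈ B`, ordered increasingly by label. -/
def indB [Fintype α] (lab : Sym2 (α ⊕ β) → ℕ) (a : α) (b : β) : ℕ :=
  (Finset.univ.filter fun a' : α =>
    lab s(Sum.inl a', Sum.inr b) ≤ lab s(Sum.inl a, Sum.inr b)).card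

/-- Underlying symmetric label function of the shifted matching graph `SM_n`:
the edge `{a_i, b_j}` gets label `(j - i) mod n`. -/
def smFun (n : ℕ) : (Fin n ⊕ Fin n) → (Fin n ⊕ Fin n) → ℕ
  | Sum.inl i, Sum.inr j => (n + (j : ℕ) - (i : ℕ)) % n
  | Sum.inr j, Sum.inl i => (n + (j : ℕ) - (i : ℕ)) % n
  | _, _ => 0

theorem smFun_symm (n : ℕ) : ∀ x y, smFun n x y = smFun n y x := by
  rintro (i | i) (j | j) <;> rfl

/-- The labeling of the shifted matching graph `SM_n`. -/
def smLab (n : ℕ) : Sym2 (Fin n ⊕ Fin n) → ℕ :=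
  Sym2.lift ⟨smFun n, smFun_symm n⟩

end TS

/-!
In an extremally matched bi-clique take the stars of `a` and of `b` together with the two
matchings `M⁻` and `M⁺`. If `{a', b'}` is `e`-reverted because `λ({a', b}) ≤ λ({π⁺(b'), b})`,
then `a' → b → π⁺(b') → b'` is a temporal path, since `b'` is the latest neighbour of `π⁺(b')`;
if instead `λ({π⁻(a'), a}) ≤ λ({b', a})`, then `a' → π⁻(a') → a → b'` is one, since `a'` is the
earliest neighbour of `π⁻(a')`. Adding `M(e)` serves the remaining pairs by single edges.
The two stars have `2n - 1` edges; each matching has one edge in the star of `a` and one in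
the star of `b`, and these coincide for at most one of the two matchings because
`π⁻(a) ≠ π⁺(a)`, so the matchings add at most `2n - 3` edges.
-/

namespace TS

section Reachability

variable {V L : Type} [LinearOrder L] {lab : Sym2 V → L} {S : Set (Sym2 V)}

theorem reaches_of_mem {u v : V} (h : s(u, v) ∈ S) : Reaches lab S u v :=
  ⟨[u, v], rfl, rfl, by simp, by simp [pathEdges, h],
    show List.IsChain _ _ by simp [pathEdges]⟩

theorem reaches_of_path₃ {u v w x : V} (h₁ : s(u, v) ∈ S) (h₂ : s(v, w) ∈ S) (h₃ : s(w, x) ∈ S)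
    (l₁ : lab s(u, v) ≤ lab s(v, w)) (l₂ : lab s(v, w) ≤ lab s(w, x)) : Reaches lab S u x :=
  ⟨[u, v, w, x], rfl, rfl, by simp, by simp [pathEdges, h₁, h₂, h₃],
    show List.IsChain _ _ by simp [pathEdges, l₁, l₂]⟩

theorem Reaches.mono {T : Set (Sym2 V)} {u v : V} (hST : S ⊆ T) :
    Reaches lab S u v → Reaches lab T u v :=
  fun ⟨q, hu, hv, hq, hqS, hlab⟩ => ⟨q, hu, hv, hq, fun e he => hST (hqS e he), hlab⟩

end Reachability

variable {α β L : Type} [LinearOrder L] {lab : Sym2 (α ⊕ β) → L}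

section Neighbours

variable (hinj : Set.InjOn lab (bicliqueEdges α β))
include hinj

omit [LinearOrder L] in
theorem eq_of_lab_eq {x x' : α} {y y' : β}
    (h : lab s(Sum.inl x, Sum.inr y) = lab s(Sum.inl x', Sum.inr y')) : x = x' ∧ y = y' := by
  simpa using hinj ⟨x, y, rfl⟩ ⟨x', y', rfl⟩ h

theorem IsEarliestNbrA.unique {x : α} {y y' : β} (h : IsEarliestNbrA lab x y)
    (h' : IsEarliestNbrA lab x y') : y = y' :=
  (eq_of_lab_eq hinj (le_antisymm (h y') (h' y))).2

theorem IsLatestNbrB.unique {y : β} {x x' : α} (h : IsLatestNbrB lab y x)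
    (h' : IsLatestNbrB lab y x') : x = x' :=
  (eq_of_lab_eq hinj (le_antisymm (h' x) (h x'))).1

theorem IsEarliestNbrA.ne_of_isLatestNbrA [Fintype β] (hβ : 1 < Fintype.card β) {x : α}
    {y z : β} (hy : IsEarliestNbrA lab x y) (hz : IsLatestNbrA lab x z) : y ≠ z := by
  rintro rfl
  obtain ⟨y', hy'⟩ := Fintype.exists_ne_of_one_lt_card hβ y
  exact hy' (eq_of_lab_eq hinj (le_antisymm (hz y') (hy y'))).2

end Neighbours

theorem ExtremallyMatched.exists_equiv (h : ExtremallyMatched lab) :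
    ∃ m p : α ≃ β, (∀ x, IsEarliestNbrA lab x (m x)) ∧ (∀ y, IsEarliestNbrB lab y (m.symm y)) ∧
      (∀ x, IsLatestNbrA lab x (p x)) ∧ (∀ y, IsLatestNbrB lab y (p.symm y)) := by
  obtain ⟨⟨f, g, hf, hg, hgf, hfg⟩, ⟨f', g', hf', hg', hgf', hfg'⟩⟩ := h
  exact ⟨⟨f, g, hgf, hfg⟩, ⟨f', g', hgf', hfg'⟩, hf, hg, hf', hg'⟩

def starA (a : α) : Set (Sym2 (α ⊕ β)) := Set.range fun y : β => s(Sum.inl a, Sum.inr y)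

def starB (b : β) : Set (Sym2 (α ⊕ β)) := Set.range fun x : α => s(Sum.inl x, Sum.inr b)

def matchingEdges (f : α → β) : Set (Sym2 (α ⊕ β)) :=
  Set.range fun x : α => s(Sum.inl x, Sum.inr (f x))

def spannerCore (a : α) (b : β) (m p : α → β) : Set (Sym2 (α ⊕ β)) :=
  starA a ∪ starB b ∪ matchingEdges m ∪ matchingEdges p

section SpannerCore

variable {a : α} {b : β} {m p : α → β}

theorem spannerCore_subset_bicliqueEdges : spannerCore a b m p ⊆ bicliqueEdges α β := by
  rintro e (((⟨y, rfl⟩ | ⟨x, rfl⟩) | ⟨x, rfl⟩) | ⟨x, rfl⟩) <;> exact ⟨_, _, rfl⟩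

theorem reaches_spannerCore_of_earliestNbr_le {x : α} {y : β}
    (hx : IsEarliestNbrB lab (m x) x)
    (hle : lab s(Sum.inl a, Sum.inr (m x)) ≤ lab s(Sum.inl a, Sum.inr y)) :
    Reaches lab (spannerCore a b m p) (Sum.inl x) (Sum.inr y) := by
  refine reaches_of_path₃ (v := Sum.inr (m x)) (w := Sum.inl a)
    (Or.inl (Or.inr ⟨x, rfl⟩)) (Or.inl (Or.inl (Or.inl ⟨m x, Sym2.eq_swap⟩)))
    (Or.inl (Or.inl (Or.inl ⟨y, rfl⟩))) ?_ ?_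
  · rw [Sym2.eq_swap (a := Sum.inr _)]
    exact hx a
  · rwa [Sym2.eq_swap (a := Sum.inr _)]

theorem reaches_spannerCore_of_le_latestNbr {x x' : α} (hx : IsLatestNbrA lab x (p x))
    (hle : lab s(Sum.inl x', Sum.inr b) ≤ lab s(Sum.inl x, Sum.inr b)) :
    Reaches lab (spannerCore a b m p) (Sum.inl x') (Sum.inr (p x)) := by
  refine reaches_of_path₃ (v := Sum.inr b) (w := Sum.inl x)
    (Or.inl (Or.inl (Or.inr ⟨x', rfl⟩))) (Or.inl (Or.inl (Or.inr ⟨x, Sym2.eq_swap⟩)))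
    (Or.inr ⟨x, rfl⟩) ?_ ?_
  · rwa [Sym2.eq_swap (a := Sum.inr _)]
  · rw [Sym2.eq_swap (a := Sum.inr _)]
    exact hx b

end SpannerCore

theorem isBiSpanner_spannerCore_union_MSet (hinj : Set.InjOn lab (bicliqueEdges α β))
    (a : α) (b : β) {m p : α ≃ β}
    (hm : ∀ x, IsEarliestNbrA lab x (m x)) (hm' : ∀ y, IsEarliestNbrB lab y (m.symm y))
    (hp : ∀ x, IsLatestNbrA lab x (p x)) (hp' : ∀ y, IsLatestNbrB lab y (p.symm y)) :
    IsBiSpanner lab (spannerCore a b m p ∪ MSet lab a b) := by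
  refine ⟨Set.union_subset spannerCore_subset_bicliqueEdges ?_, fun x y => ?_⟩
  · rintro e ⟨x, y, rfl, -⟩
    exact ⟨x, y, rfl⟩
  by_cases hrev : Reverted lab a b x y
  · rcases hrev with ⟨x', hx', hle⟩ | ⟨y', hy', hle⟩
    · obtain rfl := (hp' y).unique hinj hx'
      have hreach := reaches_spannerCore_of_le_latestNbr (a := a) (m := m) (hp _) hle
      rw [p.apply_symm_apply] at hreach
      exact hreach.mono Set.subset_union_left
    · obtain rfl := (hm x).unique hinj hy'
      have hx : IsEarliestNbrB lab (m x) x := by simpa using hm' (m x)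
      exact (reaches_spannerCore_of_earliestNbr_le (p := p) hx hle).mono Set.subset_union_left
  · exact reaches_of_mem (Or.inr ⟨x, y, rfl, hrev⟩)

theorem ncard_union_union_le_add_diff {γ : Type*} (s t u : Set γ) :
    (s ∪ t ∪ u).ncard ≤ s.ncard + (t \ s).ncard + (u \ s).ncard := by
  have : s ∪ t ∪ u = s ∪ (t \ s) ∪ (u \ s) := by
    ext
    simp only [Set.mem_union, Set.mem_sdiff]
    tauto
  rw [this]
  exact (Set.ncard_union_le _ _).trans (by gcongr; exact Set.ncard_union_le _ _)

theorem ncard_range_le {γ δ : Type*} [Fintype γ] (f : γ → δ) :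
    (Set.range f).ncard ≤ Fintype.card γ := by
  rw [← Set.image_univ, ← Nat.card_eq_fintype_card, ← Set.ncard_univ]
  exact Set.ncard_image_le

section Counting

variable [Fintype α]

theorem ncard_matchingEdges_diff_add_le (f : α → β) (a : α) {a₀ : α} {b : β} (h : f a₀ = b) :
    (matchingEdges f \ (starA a ∪ starB b)).ncard + ({a, a₀} : Set α).ncard ≤
      Fintype.card α := by
  have hsub : matchingEdges f \ (starA a ∪ starB b) ⊆
      (fun x => s(Sum.inl x, Sum.inr (f x))) '' ({a, a₀} : Set α)ᶜ := by
    rintro e ⟨⟨x, rfl⟩, he⟩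
    refine ⟨x, fun hx => he ?_, rfl⟩
    rcases hx with rfl | rfl
    exacts [Or.inl ⟨f x, rfl⟩, Or.inr ⟨x, by simp [h]⟩]
  have hle := (Set.ncard_le_ncard hsub).trans Set.ncard_image_le
  have hpair := Set.ncard_le_card ({a, a₀} : Set α)
  rw [Set.ncard_compl, Nat.card_eq_fintype_card] at hle
  rw [Nat.card_eq_fintype_card] at hpair
  omega

variable [Fintype β]

theorem ncard_starA_union_starB_add_one_le (a : α) (b : β) :
    (starA a ∪ starB b).ncard + 1 ≤ Fintype.card β + Fintype.card α := by
  have hab : s(Sum.inl a, Sum.inr b) ∈ starA a ∩ starB b := ⟨⟨b, rfl⟩, ⟨a, rfl⟩⟩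
  have hinter := Set.ncard_union_add_ncard_inter (starA a) (starB b)
  have hpos : 0 < (starA a ∩ starB b).ncard := (Set.ncard_pos (Set.toFinite _)).2 ⟨_, hab⟩
  have ha : (starA (β := β) a).ncard ≤ Fintype.card β := ncard_range_le _
  have hb : (starB (α := α) b).ncard ≤ Fintype.card α := ncard_range_le _
  omega

theorem ncard_spannerCore_le (a : α) (b : β) {m p : α ≃ β} (hmp : m a ≠ p a) :
    (spannerCore a b m p).ncard ≤ 4 * Fintype.card α - 4 := by
  have hcore := ncard_union_union_le_add_diff (starA a ∪ starB b) (matchingEdges m)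
    (matchingEdges p)
  have hstars := ncard_starA_union_starB_add_one_le a b
  have hm := ncard_matchingEdges_diff_add_le m a (m.apply_symm_apply b)
  have hp := ncard_matchingEdges_diff_add_le p a (p.apply_symm_apply b)
  have hβ : Fintype.card β = Fintype.card α := (Fintype.card_congr m).symm
  have hpairs : 3 ≤ ({a, m.symm b} : Set α).ncard + ({a, p.symm b} : Set α).ncard := by
    by_cases ha : a = m.symm b
    · have hp : a ≠ p.symm b := fun ha' =>
        hmp ((m.eq_symm_apply.1 ha).trans (p.eq_symm_apply.1 ha').symm)
      rw [Set.ncard_pair hp]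
      have := Set.one_le_ncard_insert a {m.symm b}
      omega
    · rw [Set.ncard_pair ha]
      have := Set.one_le_ncard_insert a {p.symm b}
      omega
  unfold spannerCore
  omega

end Counting

/-- an extremally matched bi-clique with injective labeling and
`n ≥ 2` vertices per side has, for every edge `e = {a,b}`, a bi-spanner of
size at most `4n − 4 + |M(e)|`, where `M(e)` is the set of edges that are not
`e`-reverted. -/
theorem stmt16 {α β : Type} [Fintype α] [Fintype β] (n : ℕ) (hn : 2 ≤ n)
    (hA : Fintype.card α = n) (hB : Fintype.card β = n)
    (lab : Sym2 (α ⊕ β) → ℕ) (hinj : Set.InjOn lab (bicliqueEdges α β))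
    (hEM : ExtremallyMatched lab) (a : α) (b : β) :
    ∃ S : Set (Sym2 (α ⊕ β)), IsBiSpanner lab S ∧
      S.ncard ≤ 4 * n - 4 + (MSet lab a b).ncard := by
  obtain ⟨m, p, hm, hm', hp, hp'⟩ := hEM.exists_equiv
  have hmp : m a ≠ p a := (hm a).ne_of_isLatestNbrA hinj (by omega) (hp a)
  refine ⟨spannerCore a b m p ∪ MSet lab a b,
    isBiSpanner_spannerCore_union_MSet hinj a b hm hm' hp hp', ?_⟩
  calc _ ≤ (spannerCore a b m p).ncard + (MSet lab a b).ncard := Set.ncard_union_le _ _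
    _ ≤ 4 * n - 4 + (MSet lab a b).ncard := by
      rw [← hA]
      exact Nat.add_le_add_right (ncard_spannerCore_le a b hmp) _

end TS
end

section
/- For every n ≥ 2, the shifted matching graph SM_n has a bi-spanner of size at most 4n − 4. -/
/-!
Take the stars of `a_0` and of `b_{n-1}` together with the matchings `{a_i, b_i}` (label `0`) and
`{a_{j+1}, b_j}` (label `n - 1`). For `i ≤ j`, `a_i` reaches `b_j` along `a_i b_i a_0 b_j`
(labels `0 ≤ i ≤ j`); for `j < i`, along `a_i b_{n-1} a_{j+1} b_j` (labels
`n-1-i ≤ n-2-j ≤ n-1`). Counting the star of `a_0`, the star of `b_{n-1}` without `{a_0, b_{n-1}}`,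
the first matching without its two edges in the stars, and the second matching gives
`n + (n-1) + (n-2) + (n-1) = 4n - 4` edges.
-/

namespace TS

open Sum

lemma reaches_of_three_edges {V L : Type} [LinearOrder L] {lab : Sym2 V → L} {S : Set (Sym2 V)}
    {u x y v : V} (hux : s(u, x) ∈ S) (hxy : s(x, y) ∈ S) (hyv : s(y, v) ∈ S)
    (h₁ : lab s(u, x) ≤ lab s(x, y)) (h₂ : lab s(x, y) ≤ lab s(y, v)) :
    Reaches lab S u v := by
  refine ⟨[u, x, y, v], rfl, rfl, List.cons_ne_nil _ _, ?_, ?_⟩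
  · simp only [pathEdges, List.tail, List.zip_cons_cons, List.zip_nil_right, List.map_cons,
      List.map_nil, List.mem_cons, List.not_mem_nil, or_false]
    rintro e (rfl | rfl | rfl) <;> assumption
  · exact List.isChain_cons_cons.2 ⟨h₁, List.isChain_cons_cons.2 ⟨h₂, List.isChain_singleton _⟩⟩

section SMLabel

variable {n : ℕ} {i j : Fin n}

lemma smLab_inr_inl : smLab n s(inr j, inl i) = smLab n s(inl i, inr j) := rfl

lemma smLab_of_le (h : i ≤ j) : smLab n s(inl i, inr j) = j - i := by
  change (n + j - i) % n = j - i
  rw [Nat.add_sub_assoc (Fin.le_def.1 h), Nat.add_mod_left, Nat.mod_eq_of_lt (by omega)]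

lemma smLab_of_lt (h : j < i) : smLab n s(inl i, inr j) = n + j - i :=
  Nat.mod_eq_of_lt (by omega)

end SMLabel

/-- The spanner of `SM_{m+1}`; `a_i` is `inl i` and `b_j` is `inr j`. -/
def smSpanner (m : ℕ) : Set (Sym2 (Fin (m + 1) ⊕ Fin (m + 1))) :=
  {e | ∃ i j : Fin (m + 1), e = s(inl i, inr j) ∧
    (i = 0 ∨ j = Fin.last m ∨ i = j ∨ i = j + 1)}

section SMSpanner

variable {m : ℕ} {i j : Fin (m + 1)}

lemma mk_mem_smSpanner (h : i = 0 ∨ j = Fin.last m ∨ i = j ∨ i = j + 1) :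
    s(inl i, inr j) ∈ smSpanner m :=
  ⟨i, j, rfl, h⟩

lemma smSpanner_subset_bicliqueEdges : smSpanner m ⊆ bicliqueEdges _ _ := by
  rintro _ ⟨i, j, rfl, -⟩
  exact ⟨i, j, rfl⟩

lemma reaches_smSpanner_of_le (h : i ≤ j) :
    Reaches (smLab (m + 1)) (smSpanner m) (inl i) (inr j) := by
  refine reaches_of_three_edges (x := inr i) (y := inl 0) (mk_mem_smSpanner (by simp))
    (Sym2.eq_swap ▸ mk_mem_smSpanner (by simp)) (mk_mem_smSpanner (by simp)) ?_ ?_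
  · rw [smLab_of_le le_rfl, Nat.sub_self]
    exact Nat.zero_le _
  · rw [smLab_inr_inl, smLab_of_le (Fin.zero_le i), smLab_of_le (Fin.zero_le j)]
    simpa using h

lemma reaches_smSpanner_of_lt (h : j < i) :
    Reaches (smLab (m + 1)) (smSpanner m) (inl i) (inr j) := by
  have hj : ((j + 1 : Fin (m + 1)) : ℕ) = j + 1 :=
    Fin.val_add_one_of_lt (lt_of_lt_of_le h (Fin.le_last i))
  refine reaches_of_three_edges (x := inr (Fin.last m)) (y := inl (j + 1))
    (mk_mem_smSpanner (by simp)) (Sym2.eq_swap ▸ mk_mem_smSpanner (by simp))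
    (mk_mem_smSpanner (by simp)) ?_ ?_
  · rw [smLab_inr_inl, smLab_of_le (Fin.le_last i), smLab_of_le (Fin.le_last _)]
    simp only [Fin.val_last, hj]
    omega
  · rw [smLab_inr_inl, smLab_of_le (Fin.le_last _), smLab_of_lt (Fin.lt_def.2 (by omega))]
    simp only [Fin.val_last, hj]
    omega

lemma smSpanner_isBiSpanner : IsBiSpanner (smLab (m + 1)) (smSpanner m) :=
  ⟨smSpanner_subset_bicliqueEdges, fun _ _ =>
    (le_or_gt _ _).elim reaches_smSpanner_of_le reaches_smSpanner_of_lt⟩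

open Finset in
lemma ncard_smSpanner_le (hm : m ≠ 0) : (smSpanner m).ncard ≤ 4 * m := by
  have hlast : Fin.last m ≠ 0 := fun h => hm (congrArg Fin.val h)
  let star₀ := univ.image fun j : Fin (m + 1) => s(inl (0 : Fin (m + 1)), inr j)
  let starLast := (univ.erase 0).image fun i : Fin (m + 1) => s(inl i, inr (Fin.last m))
  let diag := ((univ.erase 0).erase (Fin.last m)).image fun i : Fin (m + 1) => s(inl i, inr i)
  let subdiag := (univ.erase (Fin.last m)).image fun j : Fin (m + 1) => s(inl (j + 1), inr j)
  have hsub : smSpanner m ⊆ ↑(star₀ ∪ starLast ∪ diag ∪ subdiag) := by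
    rintro _ ⟨i, j, rfl, h⟩
    simp only [mem_coe, mem_union]
    by_cases hi : i = 0
    · subst hi
      exact .inl (.inl (.inl (mem_image_of_mem _ (mem_univ j))))
    by_cases hj : j = Fin.last m
    · subst hj
      exact .inl (.inl (.inr (mem_image_of_mem _ (mem_erase.2 ⟨hi, mem_univ i⟩))))
    rcases h with h | h | rfl | rfl
    · exact absurd h hi
    · exact absurd h hj
    · exact .inl (.inr (mem_image_of_mem _ (mem_erase.2 ⟨hj, mem_erase.2 ⟨hi, mem_univ _⟩⟩)))
    · exact .inr (mem_image_of_mem _ (mem_erase.2 ⟨hj, mem_univ j⟩))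
  calc (smSpanner m).ncard ≤ (star₀ ∪ starLast ∪ diag ∪ subdiag).card :=
        (Set.ncard_le_ncard hsub).trans_eq (Set.ncard_coe_finset _)
    _ ≤ star₀.card + starLast.card + diag.card + subdiag.card := by
        refine (card_union_le _ _).trans (Nat.add_le_add_right ?_ _)
        exact (card_union_le _ _).trans (Nat.add_le_add_right (card_union_le _ _) _)
    _ ≤ (m + 1) + m + (m - 1) + m := by
        gcongr <;> refine card_image_le.trans ?_
        · simp
        · simp
        · rw [card_erase_of_mem (mem_erase.2 ⟨hlast, mem_univ _⟩), card_erase_of_mem (mem_univ _)]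
          simp
        · simp
    _ = 4 * m := by omega

end SMSpanner

/-- for every `n ≥ 2`, the shifted matching graph `SM_n` has a
bi-spanner of size at most `4n − 4`. -/
theorem stmt17 (n : ℕ) (hn : 2 ≤ n) :
    ∃ S : Set (Sym2 (Fin n ⊕ Fin n)),
      IsBiSpanner (smLab n) S ∧ S.ncard ≤ 4 * n - 4 := by
  obtain ⟨m, rfl⟩ : ∃ m, n = m + 1 := ⟨n - 1, by omega⟩
  exact ⟨smSpanner m, smSpanner_isBiSpanner, (ncard_smSpanner_le (by omega)).trans (by omega)⟩

end TS
end

section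
/- Let G = (A_G, B_G, λ_G) and H = (A_H, B_H, λ_H) be temporal bi-cliques with n_G = |A_G| = |B_G| and n_H = |A_H| = |B_H|, and let S_G be a bi-spanner of G and S_H a bi-spanner of H. Then the product graph G×H has a bi-spanner of size at most |S_G|·n_H + |S_H|·n_G. -/
namespace TS

/-- Underlying symmetric label function of the product graph `G × H`: the
edge `{(a_G,a_H), (b_G,b_H)}` gets the label
`(λ_G({a_G,b_G}), λ_H({a_H,b_H}))`, compared lexicographically. -/
def prodFun {αG βG αH βH : Type}
    (labG : Sym2 (αG ⊕ βG) → ℕ) (labH : Sym2 (αH ⊕ βH) → ℕ) :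
    (αG × αH ⊕ βG × βH) → (αG × αH ⊕ βG × βH) → Lex (ℕ × ℕ)
  | Sum.inl x, Sum.inr y =>
      toLex (labG s(Sum.inl x.1, Sum.inr y.1), labH s(Sum.inl x.2, Sum.inr y.2))
  | Sum.inr y, Sum.inl x =>
      toLex (labG s(Sum.inl x.1, Sum.inr y.1), labH s(Sum.inl x.2, Sum.inr y.2))
  | _, _ => toLex (0, 0)

theorem prodFun_symm {αG βG αH βH : Type}
    (labG : Sym2 (αG ⊕ βG) → ℕ) (labH : Sym2 (αH ⊕ βH) → ℕ) :
    ∀ x y, prodFun labG labH x y = prodFun labG labH y x := by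
  rintro (x | x) (y | y) <;> rfl

/-- The lexicographic labeling of the product graph `G × H`. -/
def prodLab {αG βG αH βH : Type}
    (labG : Sym2 (αG ⊕ βG) → ℕ) (labH : Sym2 (αH ⊕ βH) → ℕ) :
    Sym2 (αG × αH ⊕ βG × βH) → Lex (ℕ × ℕ) :=
  Sym2.lift ⟨prodFun labG labH, prodFun_symm labG labH⟩

/-!
Write `π⁻(u)` for the earliest neighbour of `u ∈ A_H` in `H`, and `π(b)` for the latest
neighbour of `b ∈ B_G` along an edge of `S_G`. Take a copy of `S_G` over each `H`-edge
`{u, π⁻(u)}` (the maps `copyG`) and a copy of `S_H` over each `G`-edge `{π(b), b}` (the maps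
`copyH`): that is `|S_G|·n_H + |S_H|·n_G` edges. To get from `(a_G, a_H)` to `(b_G, b_H)`,
follow an `S_G`-path from `a_G` to `b_G` in the copy over `{a_H, π⁻(a_H)}`, cross the edge
`{(b_G, π⁻(a_H)), (π(b_G), a_H)}`, then follow an `S_H`-path from `a_H` to `b_H` in the copy
over `{π(b_G), b_G}`. Lexicographically the crossing edge carries
`t = (λ_G(π(b_G), b_G), λ_H(a_H, π⁻(a_H)))`. The first part stays at or below `t`, since
its labels are bounded by that of the `S_G`-edge entering `b_G`. The last part stays at or
above `t`, since its labels are bounded below by that of the edge leaving `a_H`.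
-/

section TemporalPaths

variable {V W L L' : Type} [LinearOrder L] [LinearOrder L']
  {lab : Sym2 V → L} {S : Set (Sym2 V)}

lemma pathEdges_cons_cons (a b : V) (l : List V) :
    pathEdges (a :: b :: l) = s(a, b) :: pathEdges (b :: l) := rfl

lemma pathEdges_append {p q : List V} {x y : V} (hx : p.getLast? = some x)
    (hy : q.head? = some y) :
    pathEdges (p ++ q) = pathEdges p ++ s(x, y) :: pathEdges q := by
  obtain ⟨q, rfl⟩ := List.head?_eq_some_iff.1 hy
  induction p with
  | nil => simp at hx
  | cons a l ih =>
    cases l with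
    | nil =>
      simp only [List.getLast?_singleton, Option.some.injEq] at hx
      subst hx; rfl
    | cons b l =>
      rw [List.cons_append, List.cons_append, pathEdges_cons_cons, ← List.cons_append,
        ih (by rwa [List.getLast?_cons_cons] at hx), pathEdges_cons_cons, List.cons_append]

lemma pathEdges_map (f : V → W) (p : List V) :
    pathEdges (p.map f) = (pathEdges p).map (Sym2.map f) := by
  unfold pathEdges
  rw [← List.map_tail, List.zip_map, List.map_map, List.map_map]
  simp [Function.comp_def, Sym2.map_mk]

theorem IsTemporalPath.map {lab' : Sym2 W → L'} {S' : Set (Sym2 W)} (f : V → W)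
    {g : L → L'} (hg : Monotone g) (hS : ∀ e ∈ S, e.map f ∈ S')
    (hlab : ∀ e ∈ S, lab' (e.map f) = g (lab e)) {p : List V}
    (hp : IsTemporalPath lab S p) : IsTemporalPath lab' S' (p.map f) := by
  obtain ⟨hne, hmem, hchain⟩ := hp
  refine ⟨by simpa using hne, ?_, ?_⟩
  · rw [pathEdges_map]
    simp only [List.mem_map, forall_exists_index, and_imp, forall_apply_eq_imp_iff₂]
    exact fun e he => hS e (hmem e he)
  · rw [pathEdges_map, List.Chain', List.isChain_map]
    refine hchain.imp_of_mem_imp fun e e' he he' hle => ?_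
    rw [hlab e (hmem e he), hlab e' (hmem e' he')]
    exact hg hle

theorem IsTemporalPath.pairwise {p : List V} (hp : IsTemporalPath lab S p) :
    (pathEdges p).Pairwise fun e f => lab e ≤ lab f := by
  have hchain : ((pathEdges p).map lab).IsChain (· ≤ ·) := List.isChain_map _ |>.2 hp.2.2
  exact List.pairwise_map.1 hchain.pairwise

theorem IsTemporalPath.exists_last_edge {p : List V} {u v : V}
    (hp : IsTemporalPath lab S p) (hu : p.head? = some u) (hv : p.getLast? = some v)
    (huv : u ≠ v) : ∃ w, s(w, v) ∈ S ∧ ∀ e ∈ pathEdges p, lab e ≤ lab s(w, v) := by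
  obtain ⟨p', rfl⟩ := List.getLast?_eq_some_iff.1 hv
  obtain ⟨w, hw⟩ : ∃ w, p'.getLast? = some w := by
    cases p' with
    | nil => exact absurd (by simpa using hu.symm) huv
    | cons a l => exact ⟨_, List.getLast?_eq_some_getLast (List.cons_ne_nil a l)⟩
  have hedges : pathEdges (p' ++ [v]) = pathEdges p' ++ [s(w, v)] :=
    pathEdges_append hw rfl
  have hpair := hp.pairwise
  rw [hedges, List.pairwise_append] at hpair
  refine ⟨w, hp.2.1 _ (by simp [hedges]), fun e he => ?_⟩
  rw [hedges, List.mem_append, List.mem_singleton] at he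
  rcases he with he | rfl
  · exact hpair.2.2 e he _ (List.mem_singleton_self _)
  · exact le_rfl

theorem IsTemporalPath.exists_first_edge {p : List V} {u v : V}
    (hp : IsTemporalPath lab S p) (hu : p.head? = some u) (hv : p.getLast? = some v)
    (huv : u ≠ v) : ∃ w, s(u, w) ∈ S ∧ ∀ e ∈ pathEdges p, lab s(u, w) ≤ lab e := by
  obtain ⟨q, rfl⟩ := List.head?_eq_some_iff.1 hu
  obtain ⟨w, hw⟩ : ∃ w, q.head? = some w := by
    cases q with
    | nil => exact absurd (by simpa using hv) huv
    | cons a l => exact ⟨a, rfl⟩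
  have hedges : pathEdges (u :: q) = s(u, w) :: pathEdges q :=
    pathEdges_append (p := [u]) rfl hw
  have hpair := hp.pairwise
  rw [hedges, List.pairwise_cons] at hpair
  refine ⟨w, hp.2.1 _ (by simp [hedges]), fun e he => ?_⟩
  rw [hedges, List.mem_cons] at he
  rcases he with rfl | he
  · exact le_rfl
  · exact hpair.1 e he

theorem reaches_of_mem_inSet_of_mem_outSet {u w x y : V} {t : L}
    (hu : u ∈ InSet lab S x t) (hw : w ∈ OutSet lab S y t) (hxy : s(x, y) ∈ S)
    (ht : lab s(x, y) = t) : Reaches lab S u w := by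
  obtain ⟨p, hpu, hpx, hp, hple⟩ := hu
  obtain ⟨q, hqy, hqw, hq, hqge⟩ := hw
  have hedges := pathEdges_append hpx hqy
  refine ⟨p ++ q, ?_, ?_, ⟨by simp [hp.1], ?_, ?_⟩⟩
  · rw [List.head?_append, hpu]; rfl
  · rw [List.getLast?_append, hqw]; rfl
  · rw [hedges]
    simp only [List.mem_append, List.mem_cons]
    rintro e (he | rfl | he)
    exacts [hp.2.1 e he, hxy, hq.2.1 e he]
  · rw [hedges, List.Chain', List.isChain_append, List.isChain_cons]
    refine ⟨hp.2.2, ⟨fun e he => ?_, hq.2.2⟩, fun e he f hf => ?_⟩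
    · exact ht ▸ hqge e (List.mem_of_mem_head? he)
    · rw [List.head?_cons, Option.mem_some_iff] at hf
      exact hf ▸ ht ▸ hple e (List.mem_of_mem_getLast? he)

end TemporalPaths

section InOutSets

variable {V W L L' : Type} [LinearOrder L] [LinearOrder L']
  {lab : Sym2 V → L} {S : Set (Sym2 V)} {lab' : Sym2 W → L'} {S' : Set (Sym2 W)}

theorem mem_inSet_map (f : V → W) {g : L → L'} (hg : Monotone g)
    (hS : ∀ e ∈ S, e.map f ∈ S') (hlab : ∀ e ∈ S, lab' (e.map f) = g (lab e))
    {u v : V} {t : L} (hu : u ∈ InSet lab S v t) : f u ∈ InSet lab' S' (f v) (g t) := by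
  obtain ⟨p, hpu, hpv, hp, hle⟩ := hu
  refine ⟨p.map f, by simp [hpu], by simp [hpv], hp.map f hg hS hlab, ?_⟩
  simp only [pathEdges_map, List.mem_map, forall_exists_index, and_imp,
    forall_apply_eq_imp_iff₂]
  exact fun e he => hlab e (hp.2.1 e he) ▸ hg (hle e he)

theorem mem_outSet_map (f : V → W) {g : L → L'} (hg : Monotone g)
    (hS : ∀ e ∈ S, e.map f ∈ S') (hlab : ∀ e ∈ S, lab' (e.map f) = g (lab e))
    {v w : V} {t : L} (hw : w ∈ OutSet lab S v t) : f w ∈ OutSet lab' S' (f v) (g t) := by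
  obtain ⟨p, hpv, hpw, hp, hge⟩ := hw
  refine ⟨p.map f, by simp [hpv], by simp [hpw], hp.map f hg hS hlab, ?_⟩
  simp only [pathEdges_map, List.mem_map, forall_exists_index, and_imp,
    forall_apply_eq_imp_iff₂]
  exact fun e he => hlab e (hp.2.1 e he) ▸ hg (hge e he)

end InOutSets

section BiSpanner

variable {α β L : Type} [LinearOrder L] {lab : Sym2 (α ⊕ β) → L} {S : Set (Sym2 (α ⊕ β))}

lemma exists_eq_inl_of_mem_bicliqueEdges {w : α ⊕ β} {b : β}
    (h : s(w, Sum.inr b) ∈ bicliqueEdges α β) : ∃ a, w = Sum.inl a := by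
  obtain ⟨a, b', h⟩ := h
  rcases Sym2.eq_iff.1 h with ⟨rfl, -⟩ | ⟨-, h⟩
  exacts [⟨a, rfl⟩, Sum.inr_ne_inl h |>.elim]

lemma exists_eq_inr_of_mem_bicliqueEdges {a : α} {w : α ⊕ β}
    (h : s(Sum.inl a, w) ∈ bicliqueEdges α β) : ∃ b, w = Sum.inr b := by
  obtain ⟨a', b, h⟩ := h
  rcases Sym2.eq_iff.1 h with ⟨-, rfl⟩ | ⟨h, -⟩
  exacts [⟨b, rfl⟩, Sum.inl_ne_inr h |>.elim]

theorem IsBiSpanner.mem_inSet (hS : IsBiSpanner lab S) (a : α) {b : β} {t : L}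
    (ht : ∀ a', s(Sum.inl a', Sum.inr b) ∈ S → lab s(Sum.inl a', Sum.inr b) ≤ t) :
    Sum.inl a ∈ InSet lab S (Sum.inr b) t := by
  obtain ⟨p, hpa, hpb, hp⟩ := hS.2 a b
  obtain ⟨w, hw, hle⟩ := hp.exists_last_edge hpa hpb Sum.inl_ne_inr
  obtain ⟨a', rfl⟩ := exists_eq_inl_of_mem_bicliqueEdges (hS.1 hw)
  exact ⟨p, hpa, hpb, hp, fun e he => (hle e he).trans (ht a' hw)⟩

theorem IsBiSpanner.mem_outSet (hS : IsBiSpanner lab S) {a : α} (b : β) {t : L}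
    (ht : ∀ b', s(Sum.inl a, Sum.inr b') ∈ S → t ≤ lab s(Sum.inl a, Sum.inr b')) :
    Sum.inr b ∈ OutSet lab S (Sum.inl a) t := by
  obtain ⟨p, hpa, hpb, hp⟩ := hS.2 a b
  obtain ⟨w, hw, hge⟩ := hp.exists_first_edge hpa hpb Sum.inl_ne_inr
  obtain ⟨b', rfl⟩ := exists_eq_inr_of_mem_bicliqueEdges (hS.1 hw)
  exact ⟨p, hpa, hpb, hp, fun e he => (ht b' hw).trans (hge e he)⟩

theorem IsBiSpanner.exists_latest_edge [Finite α] [Nonempty α] (hS : IsBiSpanner lab S)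
    (b : β) : ∃ a, s(Sum.inl a, Sum.inr b) ∈ S ∧
      ∀ a', s(Sum.inl a', Sum.inr b) ∈ S →
        lab s(Sum.inl a', Sum.inr b) ≤ lab s(Sum.inl a, Sum.inr b) := by
  obtain ⟨a₀⟩ := ‹Nonempty α›
  obtain ⟨p, hpa, hpb, hp⟩ := hS.2 a₀ b
  obtain ⟨w, hw, -⟩ := hp.exists_last_edge hpa hpb Sum.inl_ne_inr
  obtain ⟨a₁, rfl⟩ := exists_eq_inl_of_mem_bicliqueEdges (hS.1 hw)
  exact Set.exists_max_image {a | s(Sum.inl a, Sum.inr b) ∈ S}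
    (fun a => lab s(Sum.inl a, Sum.inr b)) (Set.toFinite _) ⟨a₁, hw⟩

end BiSpanner

section Product

variable {αG βG αH βH : Type} (labG : Sym2 (αG ⊕ βG) → ℕ) (labH : Sym2 (αH ⊕ βH) → ℕ)

def copyG (u : αH) (w : βH) : αG ⊕ βG → αG × αH ⊕ βG × βH :=
  Sum.map (·, u) (·, w)

def copyH (a : αG) (b : βG) : αH ⊕ βH → αG × αH ⊕ βG × βH :=
  Sum.map (a, ·) (b, ·)

lemma map_copyG_mem_bicliqueEdges {e : Sym2 (αG ⊕ βG)} (he : e ∈ bicliqueEdges αG βG)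
    (u : αH) (w : βH) : e.map (copyG u w) ∈ bicliqueEdges (αG × αH) (βG × βH) := by
  obtain ⟨a, b, rfl⟩ := he
  exact ⟨_, _, rfl⟩

lemma map_copyH_mem_bicliqueEdges {e : Sym2 (αH ⊕ βH)} (he : e ∈ bicliqueEdges αH βH)
    (a : αG) (b : βG) : e.map (copyH a b) ∈ bicliqueEdges (αG × αH) (βG × βH) := by
  obtain ⟨u, w, rfl⟩ := he
  exact ⟨_, _, rfl⟩

lemma prodLab_map_copyG {e : Sym2 (αG ⊕ βG)} (he : e ∈ bicliqueEdges αG βG) (u : αH) (w : βH) :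
    prodLab labG labH (e.map (copyG u w)) = toLex (labG e, labH s(Sum.inl u, Sum.inr w)) := by
  obtain ⟨a, b, rfl⟩ := he
  rfl

lemma prodLab_map_copyH {e : Sym2 (αH ⊕ βH)} (he : e ∈ bicliqueEdges αH βH) (a : αG) (b : βG) :
    prodLab labG labH (e.map (copyH a b)) = toLex (labG s(Sum.inl a, Sum.inr b), labH e) := by
  obtain ⟨u, w, rfl⟩ := he
  rfl

variable {labG labH}

theorem mem_inSet_copyG {S : Set (Sym2 (αG ⊕ βG))} (hS : S ⊆ bicliqueEdges αG βG)
    {S' : Set (Sym2 (αG × αH ⊕ βG × βH))} {u : αH} {w : βH}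
    (hS' : ∀ e ∈ S, e.map (copyG u w) ∈ S') {x y : αG ⊕ βG} {t : ℕ}
    (hx : x ∈ InSet labG S y t) :
    copyG u w x ∈ InSet (prodLab labG labH) S' (copyG u w y)
      (toLex (t, labH s(Sum.inl u, Sum.inr w))) :=
  mem_inSet_map (lab := labG) (g := fun s => toLex (s, labH s(Sum.inl u, Sum.inr w))) _
    (fun _ _ h => Prod.Lex.toLex_mono (Prod.mk_le_mk.2 ⟨h, le_rfl⟩)) hS'
    (fun _ he => prodLab_map_copyG labG labH (hS he) u w) hx

theorem mem_outSet_copyH {S : Set (Sym2 (αH ⊕ βH))} (hS : S ⊆ bicliqueEdges αH βH)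
    {S' : Set (Sym2 (αG × αH ⊕ βG × βH))} {a : αG} {b : βG}
    (hS' : ∀ e ∈ S, e.map (copyH a b) ∈ S') {x y : αH ⊕ βH} {t : ℕ}
    (hx : x ∈ OutSet labH S y t) :
    copyH a b x ∈ OutSet (prodLab labG labH) S' (copyH a b y)
      (toLex (labG s(Sum.inl a, Sum.inr b), t)) :=
  mem_outSet_map (lab := labH) (g := fun s => toLex (labG s(Sum.inl a, Sum.inr b), s)) _
    (fun _ _ h => Prod.Lex.toLex_mono (Prod.mk_le_mk.2 ⟨le_rfl, h⟩)) hS'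
    (fun _ he => prodLab_map_copyH labG labH (hS he) a b) hx

end Product

lemma ncard_image_prod_univ_le {X Y Z : Type} [Finite X] [Finite Y] (s : Set X)
    (F : X × Y → Z) : (F '' (s ×ˢ Set.univ)).ncard ≤ s.ncard * Nat.card Y :=
  (Set.ncard_image_le (Set.toFinite _)).trans_eq (by rw [Set.ncard_prod, Set.ncard_univ])

theorem stmt19_general {αG βG αH βH : Type}
    [Fintype αG] [Fintype βG] [Fintype αH] [Fintype βH]
    (nG nH : ℕ) (hBG : Fintype.card βG = nG)
    (hAH : Fintype.card αH = nH)
    (labG : Sym2 (αG ⊕ βG) → ℕ) (labH : Sym2 (αH ⊕ βH) → ℕ)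
    (SG : Set (Sym2 (αG ⊕ βG))) (hSG : IsBiSpanner labG SG)
    (SH : Set (Sym2 (αH ⊕ βH))) (hSH : IsBiSpanner labH SH) :
    ∃ S : Set (Sym2 (αG × αH ⊕ βG × βH)),
      IsBiSpanner (prodLab labG labH) S ∧
      S.ncard ≤ SG.ncard * nH + SH.ncard * nG := by
  rcases isEmpty_or_nonempty αG with _ | _
  · exact ⟨∅, ⟨Set.empty_subset _, fun a => isEmptyElim a.1⟩, by simp⟩
  rcases isEmpty_or_nonempty βH with _ | _
  · exact ⟨∅, ⟨Set.empty_subset _, fun _ b => isEmptyElim b.2⟩, by simp⟩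
  choose earliest hearliest using fun u : αH =>
    Finite.exists_min fun w : βH => labH s(Sum.inl u, Sum.inr w)
  choose latest hlatest_mem hlatest using hSG.exists_latest_edge
  set S₁ := (fun q : Sym2 (αG ⊕ βG) × αH => q.1.map (copyG q.2 (earliest q.2))) '' (SG ×ˢ .univ)
  set S₂ := (fun q : Sym2 (αH ⊕ βH) × βG => q.1.map (copyH (latest q.2) q.2)) '' (SH ×ˢ .univ)
  have hS₁ (u : αH) : ∀ e ∈ SG, e.map (copyG u (earliest u)) ∈ S₁ ∪ S₂ :=
    fun e he => Or.inl ⟨(e, u), ⟨he, trivial⟩, rfl⟩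
  have hS₂ (b : βG) : ∀ e ∈ SH, e.map (copyH (latest b) b) ∈ S₁ ∪ S₂ :=
    fun e he => Or.inr ⟨(e, b), ⟨he, trivial⟩, rfl⟩
  refine ⟨S₁ ∪ S₂, ⟨?_, ?_⟩, ?_⟩
  · rintro _ (⟨⟨e, u⟩, ⟨he, -⟩, rfl⟩ | ⟨⟨e, b⟩, ⟨he, -⟩, rfl⟩)
    exacts [map_copyG_mem_bicliqueEdges (hSG.1 he) _ _,
      map_copyH_mem_bicliqueEdges (hSH.1 he) _ _]
  · rintro ⟨aG, aH⟩ ⟨bG, bH⟩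
    refine reaches_of_mem_inSet_of_mem_outSet
      (mem_inSet_copyG hSG.1 (hS₁ aH) (hSG.mem_inSet aG (hlatest bG)))
      (mem_outSet_copyH hSH.1 (hS₂ bG) (hSH.mem_outSet bH fun b' _ => hearliest aH b')) ?_ rfl
    rw [Sym2.eq_swap]
    exact hS₁ aH _ (hlatest_mem bG)
  · refine (Set.ncard_union_le _ _).trans (add_le_add ?_ ?_)
    · exact (ncard_image_prod_univ_le _ _).trans_eq (by rw [Nat.card_eq_fintype_card, hAH])
    · exact (ncard_image_prod_univ_le _ _).trans_eq (by rw [Nat.card_eq_fintype_card, hBG])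

/-- if `G` and `H` are temporal bi-cliques of sizes `n_G` and
`n_H` with bi-spanners `S_G` and `S_H`, then the product graph `G × H` has a
bi-spanner of size at most `|S_G|·n_H + |S_H|·n_G`. -/
theorem stmt19 {αG βG αH βH : Type}
    [Fintype αG] [Fintype βG] [Fintype αH] [Fintype βH]
    (nG nH : ℕ) (hAG : Fintype.card αG = nG) (hBG : Fintype.card βG = nG)
    (hAH : Fintype.card αH = nH) (hBH : Fintype.card βH = nH)
    (labG : Sym2 (αG ⊕ βG) → ℕ) (labH : Sym2 (αH ⊕ βH) → ℕ)
    (SG : Set (Sym2 (αG ⊕ βG))) (hSG : IsBiSpanner labG SG)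
    (SH : Set (Sym2 (αH ⊕ βH))) (hSH : IsBiSpanner labH SH) :
    ∃ S : Set (Sym2 (αG × αH ⊕ βG × βH)),
      IsBiSpanner (prodLab labG labH) S ∧
      S.ncard ≤ SG.ncard * nH + SH.ncard * nG :=
  stmt19_general nG nH hBG hAH labG labH SG hSG SH hSH

end TS
end
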